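/- arXiv:2510.24490 — 6 statements merged into one kernel-verified Lean document; each statement's English description precedes it below -/
import Mathlib

section
/- Let R be a finite multiset of rectangular Young diagrams and d_R the gcd of the multiplicities of the distinct rectangles in R. For each j, let c_{m,j} denote the total number of cells of R in columns of index at most j and rows of index greater than m, plus the number of cells in rows of index at most m (i.e., the maximal entry in column j of the filling row_m(R)), and let a_{m,m} denote the total number of cells of R in rows of index at most m. Then the gcd of the set consisting of all c_{m,j} and all a_{m,m} (over all valid m and j) equals d_R. -/
open Finset

lemma key_fiber_dvd (k : ℕ) (s r : Fin k → ℕ) (hs : ∀ i, 0 < s i)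
    (hr : ∀ i, 0 < r i) (L : ℕ)
    (hA : ∀ m ≤ Finset.univ.sup r, L ∣ ∑ i, s i * min (r i) m)
    (hC : ∀ m ≤ Finset.univ.sup r, ∀ j, 1 ≤ j → j ≤ Finset.univ.sup s →
      L ∣ (∑ i, s i * min (r i) m) + ∑ i, min (s i) j * (r i - m)) :
    ∀ p ∈ Finset.univ.image (fun i => (s i, r i)),
      L ∣ (Finset.univ.filter fun i => (s i, r i) = p).card := by
  set r' := Finset.univ.sup r with hr'def
  set s' := Finset.univ.sup s with hs'def
  -- L divides f m j := ∑ i, min (s i) j * (r i - m)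
  have hF : ∀ m ≤ r', ∀ j ≤ s', L ∣ ∑ i, min (s i) j * (r i - m) := by
    intro m hm j hj
    rcases Nat.eq_zero_or_pos j with hj0 | hj1
    · subst hj0; simp
    · have h1 := hC m hm j hj1 hj
      have h2 := hA m hm
      have := Nat.dvd_sub h1 h2
      simpa [Nat.add_sub_cancel_left, Nat.add_comm] using this
  -- L divides g m j := ∑ i, if m+1 ≤ r i then min (s i) j else 0
  have hG : ∀ m, m + 1 ≤ r' → ∀ j ≤ s',
      L ∣ ∑ i, (if m + 1 ≤ r i then min (s i) j else 0) := by
    intro m hm j hj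
    have hid : (∑ i, min (s i) j * (r i - m)) =
        (∑ i, (if m + 1 ≤ r i then min (s i) j else 0)) +
          ∑ i, min (s i) j * (r i - (m + 1)) := by
      rw [← Finset.sum_add_distrib]
      refine Finset.sum_congr rfl fun i _ => ?_
      rcases le_or_gt (m + 1) (r i) with h | h
      · have h' : r i - m = (r i - (m + 1)) + 1 := by omega
        rw [h', if_pos h]; ring
      · have h1 : r i - m = 0 := by omega
        have h2 : r i - (m + 1) = 0 := by omega
        rw [h1, h2, if_neg (by omega)]; simp
    have d1 := hF m (by omega) j hj
    have d2 := hF (m + 1) hm j hj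
    have heq : (∑ i, (if m + 1 ≤ r i then min (s i) j else 0)) =
        (∑ i, min (s i) j * (r i - m)) - ∑ i, min (s i) j * (r i - (m + 1)) := by
      omega
    rw [heq]
    exact Nat.dvd_sub d1 d2
  -- L divides the number of rectangles containing cell (row, col)
  have hN : ∀ row col, 1 ≤ row → 1 ≤ col →
      L ∣ ∑ i, (if row ≤ r i ∧ col ≤ s i then 1 else 0) := by
    intro row col hrow hcol
    rcases le_or_gt row r' with hrow' | hrow'
    swap
    · have : (∑ i, (if row ≤ r i ∧ col ≤ s i then 1 else 0)) = 0 := by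
        refine Finset.sum_eq_zero fun i _ => ?_
        have : r i ≤ r' := Finset.le_sup (Finset.mem_univ i)
        rw [if_neg (by omega)]
      simp [this]
    rcases le_or_gt col s' with hcol' | hcol'
    swap
    · have : (∑ i, (if row ≤ r i ∧ col ≤ s i then 1 else 0)) = 0 := by
        refine Finset.sum_eq_zero fun i _ => ?_
        have : s i ≤ s' := Finset.le_sup (Finset.mem_univ i)
        rw [if_neg (by omega)]
      simp [this]
    -- row = m + 1 with m + 1 ≤ r'
    obtain ⟨m, rfl⟩ : ∃ m, row = m + 1 := ⟨row - 1, by omega⟩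
    have hid : (∑ i, (if m + 1 ≤ r i then min (s i) col else 0)) =
        (∑ i, (if m + 1 ≤ r i ∧ col ≤ s i then 1 else 0)) +
          ∑ i, (if m + 1 ≤ r i then min (s i) (col - 1) else 0) := by
      rw [← Finset.sum_add_distrib]
      refine Finset.sum_congr rfl fun i _ => ?_
      split_ifs <;> omega
    have d1 := hG m hrow' col hcol'
    have d2 := hG m hrow' (col - 1) (by omega)
    have heq : (∑ i, (if m + 1 ≤ r i ∧ col ≤ s i then 1 else 0)) =
        (∑ i, (if m + 1 ≤ r i then min (s i) col else 0)) -
          ∑ i, (if m + 1 ≤ r i then min (s i) (col - 1) else 0) := by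
      omega
    rw [heq]
    exact Nat.dvd_sub d1 d2
  -- conclude
  intro p hp
  obtain ⟨i0, _, hi0⟩ := Finset.mem_image.mp hp
  have hp1 : 1 ≤ p.1 := by
    have := hs i0
    have : s i0 = p.1 := by rw [← hi0]
    omega
  have hp2 : 1 ≤ p.2 := by
    have := hr i0
    have : r i0 = p.2 := by rw [← hi0]
    omega
  rw [Finset.card_filter]
  have hid : (∑ i, (if p.2 ≤ r i ∧ p.1 ≤ s i then 1 else 0)) +
      (∑ i, (if p.2 + 1 ≤ r i ∧ p.1 + 1 ≤ s i then 1 else 0)) =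
      (∑ i, if (s i, r i) = p then 1 else 0) +
        ((∑ i, (if p.2 + 1 ≤ r i ∧ p.1 ≤ s i then 1 else 0)) +
          ∑ i, (if p.2 ≤ r i ∧ p.1 + 1 ≤ s i then 1 else 0)) := by
    rw [← Finset.sum_add_distrib, ← Finset.sum_add_distrib, ← Finset.sum_add_distrib]
    refine Finset.sum_congr rfl fun i _ => ?_
    simp only [Prod.ext_iff]
    split_ifs <;> omega
  have d1 := hN p.2 p.1 hp2 hp1
  have d2 := hN (p.2 + 1) (p.1 + 1) (by omega) (by omega)
  have d3 := hN (p.2 + 1) p.1 (by omega) hp1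
  have d4 := hN p.2 (p.1 + 1) hp2 (by omega)
  have heq : (∑ i, if (s i, r i) = p then 1 else 0) =
      ((∑ i, (if p.2 ≤ r i ∧ p.1 ≤ s i then 1 else 0)) +
        (∑ i, (if p.2 + 1 ≤ r i ∧ p.1 + 1 ≤ s i then 1 else 0))) -
      ((∑ i, (if p.2 + 1 ≤ r i ∧ p.1 ≤ s i then 1 else 0)) +
        ∑ i, (if p.2 ≤ r i ∧ p.1 + 1 ≤ s i then 1 else 0)) := by
    omega
  rw [heq]
  exact Nat.dvd_sub (Nat.dvd_add d1 d2) (Nat.dvd_add d3 d4)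

/-- Let `R = (R_1, …, R_k)` be rectangles, `R_i` having `s i`
columns and `r i` rows, and let `d_R` be the gcd of the multiplicities of the
distinct rectangles.  For `0 ≤ m ≤ r' = max r_i`, let
`a m = ∑ i, s i * min (r i) m` (the number of cells in rows ≤ m, i.e. the
entry `a_{m,m}` of `row_m(R)`), and for `1 ≤ j ≤ s' = max s_i` let
`c m j = a m + ∑ i, min (s i) j * (r i - m)` (the number of cells in rows ≤ m
plus the cells in columns ≤ j and rows > m, i.e. the maximal entry `c_{m,j}`
in column `j` of `row_m(R)`).  Then the gcd of all the `c m j` and all the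
`a m` equals `d_R`. -/
theorem gcd_superstandard_entries_eq_dR (k : ℕ) (hk : 0 < k)
    (s r : Fin k → ℕ) (hs : ∀ i, 0 < s i) (hr : ∀ i, 0 < r i) :
    Nat.gcd
      (Finset.gcd
        ((Icc 0 (Finset.univ.sup r)) ×ˢ (Icc 1 (Finset.univ.sup s)))
        (fun q : ℕ × ℕ =>
          (∑ i, s i * min (r i) q.1) + ∑ i, min (s i) q.2 * (r i - q.1)))
      (Finset.gcd (Icc 0 (Finset.univ.sup r))
        (fun m => ∑ i, s i * min (r i) m)) =
    (Finset.univ.image fun i => (s i, r i)).gcd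
      (fun p => (Finset.univ.filter fun i => (s i, r i) = p).card) := by
  set L := Nat.gcd
      (Finset.gcd
        ((Icc 0 (Finset.univ.sup r)) ×ˢ (Icc 1 (Finset.univ.sup s)))
        (fun q : ℕ × ℕ =>
          (∑ i, s i * min (r i) q.1) + ∑ i, min (s i) q.2 * (r i - q.1)))
      (Finset.gcd (Icc 0 (Finset.univ.sup r))
        (fun m => ∑ i, s i * min (r i) m)) with hL
  set d := (Finset.univ.image fun i => (s i, r i)).gcd
      (fun p => (Finset.univ.filter fun i => (s i, r i) = p).card) with hd
  have hA : ∀ m ≤ Finset.univ.sup r, L ∣ ∑ i, s i * min (r i) m := by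
    intro m hm
    exact dvd_trans (Nat.gcd_dvd_right _ _)
      (Finset.gcd_dvd (by simp [Finset.mem_Icc, hm]))
  have hC : ∀ m ≤ Finset.univ.sup r, ∀ j, 1 ≤ j → j ≤ Finset.univ.sup s →
      L ∣ (∑ i, s i * min (r i) m) + ∑ i, min (s i) j * (r i - m) := by
    intro m hm j hj1 hj2
    exact dvd_trans (Nat.gcd_dvd_left _ _)
      (Finset.gcd_dvd (b := (m, j))
        (by rw [Finset.mem_product, Finset.mem_Icc, Finset.mem_Icc]
            exact ⟨⟨Nat.zero_le _, hm⟩, hj1, hj2⟩))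
  apply Nat.dvd_antisymm
  · -- L ∣ d
    exact Finset.dvd_gcd (key_fiber_dvd k s r hs hr L hA hC)
  · -- d ∣ L
    apply Nat.dvd_gcd
    · apply Finset.dvd_gcd
      intro q hq
      rw [← Finset.sum_add_distrib]
      have : (∑ i, (s i * min (r i) q.1 + min (s i) q.2 * (r i - q.1))) =
          ∑ p ∈ Finset.univ.image (fun i => (s i, r i)),
            (Finset.univ.filter fun i => (s i, r i) = p).card •
              (p.1 * min p.2 q.1 + min p.1 q.2 * (p.2 - q.1)) :=
        Finset.sum_comp (fun p : ℕ × ℕ =>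
          p.1 * min p.2 q.1 + min p.1 q.2 * (p.2 - q.1)) (fun i => (s i, r i))
      rw [this]
      refine Finset.dvd_sum fun p hp => ?_
      rw [smul_eq_mul]
      exact Dvd.dvd.mul_right (Finset.gcd_dvd hp) _
    · apply Finset.dvd_gcd
      intro m hm
      have : (∑ i, s i * min (r i) m) =
          ∑ p ∈ Finset.univ.image (fun i => (s i, r i)),
            (Finset.univ.filter fun i => (s i, r i) = p).card •
              (p.1 * min p.2 m) :=
        Finset.sum_comp (fun p : ℕ × ℕ => p.1 * min p.2 m) (fun i => (s i, r i))
      rw [this]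
      refine Finset.dvd_sum fun p hp => ?_
      rw [smul_eq_mul]
      exact Dvd.dvd.mul_right (Finset.gcd_dvd hp) _
end

section
/- Let T be a rectangular tableau with r+1 rows and s columns whose j-th column consists of the consecutive integers l_j, l_j+1, ..., l_j+r, with l_j + r < l_{j+1} for all j, and entries bounded by n. Then pr^{n-(l_s+r)+(r+1)}(T) is the tableau whose first column is 1,2,...,r+1, and whose column j+1 (for 1 <= j <= s-1) consists of the entries of column j of T each increased by n-(l_s+r)+(r+1). -/
/-!  Schützenberger promotion on rectangular tableaux, modelled as functions
`T : ℕ → ℕ → ℕ` (row, column ↦ entry, rows and columns indexed from `0`)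
with `0` for empty cells. -/

/-- Update the entry of `T` at `(r, c)` to `v`. -/
def setEntry (T : ℕ → ℕ → ℕ) (r c v : ℕ) : ℕ → ℕ → ℕ :=
  fun r' c' => if r' = r ∧ c' = c then v else T r' c'

/-- Jeu de taquin slide of a hole at `(r, c)` towards the inner (top-left)
boundary; `fuel` bounds the number of steps. -/
def jdtSlide : ℕ → (ℕ → ℕ → ℕ) → ℕ → ℕ → (ℕ → ℕ → ℕ)
  | 0, T, _, _ => T
  | fuel + 1, T, r, c =>
    let a := if r = 0 then 0 else T (r - 1) c
    let b := if c = 0 then 0 else T r (c - 1)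
    if a = 0 ∧ b = 0 then T
    else if b ≤ a then
      jdtSlide fuel (setEntry (setEntry T r c a) (r - 1) c 0) (r - 1) c
    else
      jdtSlide fuel (setEntry (setEntry T r c b) r (c - 1) 0) r (c - 1)

/-- Remove the entry at cell `rc` and slide the hole to the inner boundary. -/
def removeAndSlide (T : ℕ → ℕ → ℕ) (rc : ℕ × ℕ) : ℕ → ℕ → ℕ :=
  jdtSlide (rc.1 + rc.2 + 1) (setEntry T rc.1 rc.2 0) rc.1 rc.2

/-- The cells of the `rows × cols` rectangle whose entry is `n`, listed from
bottom to top (left to right within each row). -/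
def cellsWithMax (rows cols n : ℕ) (T : ℕ → ℕ → ℕ) : List (ℕ × ℕ) :=
  (List.range rows).reverse.flatMap fun r =>
    (List.range cols).filterMap fun c =>
      if T r c = n then some (r, c) else none

/-- Promotion with respect to `n` on a `rows × cols` rectangular tableau. -/
def promotion (rows cols n : ℕ) (T : ℕ → ℕ → ℕ) : ℕ → ℕ → ℕ :=
  fun r c =>
    if r < rows ∧ c < cols then
      ((cellsWithMax rows cols n T).foldl removeAndSlide T) r c + 1
    else 0

/-!
While every entry is below `n`, promotion just adds `1` to each entry, so after
`n - (l_s + r)` steps the last column ends in `n`. From then on the `t`-th promotion removes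
the single `n` in the bottom-right corner and its hole climbs the last column up to row `t`,
runs left along row `t` (the row above is smaller, having already been promoted), and climbs
the first column to the corner, where the new `1` appears. After `r + 1` such steps the last
column has become `1, …, r + 1` in front and every other column has moved one place right.
-/

theorem mem_cellsWithMax {rows cols n : ℕ} {T : ℕ → ℕ → ℕ} {x : ℕ × ℕ} :
    x ∈ cellsWithMax rows cols n T ↔ x.1 < rows ∧ x.2 < cols ∧ T x.1 x.2 = n := by
  obtain ⟨p, q⟩ := x
  simp only [cellsWithMax, List.mem_flatMap, List.mem_reverse, List.mem_range,
    List.mem_filterMap, Option.ite_none_right_eq_some, Option.some.injEq, Prod.mk.injEq]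
  grind

theorem nodup_cellsWithMax (rows cols n : ℕ) (T : ℕ → ℕ → ℕ) :
    (cellsWithMax rows cols n T).Nodup := by
  refine List.nodup_flatMap.mpr ⟨fun p _ => ?_, ?_⟩
  · refine List.Nodup.filterMap (fun a a' b ha ha' => ?_) List.nodup_range
    grind
  · refine List.pairwise_reverse.mpr <| List.nodup_range.pairwise_of_forall_ne
      fun p _ p' _ hne => List.disjoint_left.mpr fun x hx hx' => hne ?_
    simp only [List.mem_filterMap, Option.ite_none_right_eq_some, Option.some.injEq] at hx hx'
    grind

theorem cellsWithMax_eq_nil {rows cols n : ℕ} {T : ℕ → ℕ → ℕ}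
    (h : ∀ p < rows, ∀ q < cols, T p q ≠ n) : cellsWithMax rows cols n T = [] :=
  List.eq_nil_iff_forall_not_mem.mpr fun _ hx =>
    let ⟨hp, hq, hT⟩ := mem_cellsWithMax.mp hx
    h _ hp _ hq hT

theorem cellsWithMax_eq_singleton {rows cols n : ℕ} {T : ℕ → ℕ → ℕ} {x : ℕ × ℕ}
    (h : ∀ y : ℕ × ℕ, y.1 < rows ∧ y.2 < cols ∧ T y.1 y.2 = n ↔ y = x) :
    cellsWithMax rows cols n T = [x] :=
  List.perm_singleton.mp <| (List.perm_ext_iff_of_nodup (nodup_cellsWithMax ..)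
    (List.nodup_singleton x)).mpr fun y => by simp [mem_cellsWithMax, h]

theorem promotion_of_forall_ne {rows cols n : ℕ} {T : ℕ → ℕ → ℕ}
    (h : ∀ p < rows, ∀ q < cols, T p q ≠ n) :
    promotion rows cols n T = fun p q => if p < rows ∧ q < cols then T p q + 1 else 0 := by
  unfold promotion
  rw [cellsWithMax_eq_nil h, List.foldl_nil]

theorem promotion_of_unique_max {rows cols n : ℕ} {T : ℕ → ℕ → ℕ} {x : ℕ × ℕ}
    (h : ∀ y : ℕ × ℕ, y.1 < rows ∧ y.2 < cols ∧ T y.1 y.2 = n ↔ y = x) :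
    promotion rows cols n T =
      fun p q => if p < rows ∧ q < cols then removeAndSlide T x p q + 1 else 0 := by
  unfold promotion
  rw [cellsWithMax_eq_singleton h, List.foldl_cons, List.foldl_nil]

theorem jdtSlide_zero_zero (fuel : ℕ) (T : ℕ → ℕ → ℕ) : jdtSlide fuel T 0 0 = T := by
  cases fuel <;> simp [jdtSlide]

theorem jdtSlide_succ_up {fuel i c : ℕ} {T : ℕ → ℕ → ℕ} (hpos : 0 < T i c)
    (hle : c ≠ 0 → T (i + 1) (c - 1) ≤ T i c) :
    jdtSlide (fuel + 1) T (i + 1) c =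
      jdtSlide fuel (setEntry (setEntry T (i + 1) c (T i c)) i c 0) i c := by
  simp only [jdtSlide, Nat.add_sub_cancel, Nat.add_one_ne_zero, if_false]
  rw [if_neg (by omega), if_pos (by split_ifs with hc <;> omega)]

theorem jdtSlide_succ_left {fuel i c : ℕ} {T : ℕ → ℕ → ℕ} (hpos : 0 < T i c)
    (hlt : i ≠ 0 → T (i - 1) (c + 1) < T i c) :
    jdtSlide (fuel + 1) T i (c + 1) =
      jdtSlide fuel (setEntry (setEntry T i (c + 1) (T i c)) i c 0) i c := by
  simp only [jdtSlide, Nat.add_sub_cancel, Nat.add_one_ne_zero, if_false]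
  rw [if_neg (by omega), if_neg (by split_ifs with hi <;> omega)]

def shiftColumnDown (T : ℕ → ℕ → ℕ) (c a d : ℕ) : ℕ → ℕ → ℕ :=
  fun p q => if q = c ∧ a ≤ p ∧ p ≤ a + d then (if p = a then 0 else T (p - 1) c) else T p q

def shiftRowRight (T : ℕ → ℕ → ℕ) (i a d : ℕ) : ℕ → ℕ → ℕ :=
  fun p q => if p = i ∧ a ≤ q ∧ q ≤ a + d then (if q = a then 0 else T i (q - 1)) else T p q

theorem jdtSlide_shiftColumnDown {T : ℕ → ℕ → ℕ} {c a d : ℕ} (hhole : T (a + d) c = 0)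
    (hpath : ∀ p, a ≤ p → p < a + d →
      0 < T p c ∧ (c ≠ 0 → T (p + 1) (c - 1) ≤ T p c))
    (fuel : ℕ) :
    jdtSlide (fuel + d) T (a + d) c = jdtSlide fuel (shiftColumnDown T c a d) a c := by
  induction d generalizing a fuel with
  | zero =>
    congr 1
    funext p q
    simp only [shiftColumnDown]
    grind
  | succ d ih =>
    set S := shiftColumnDown T c (a + 1) d
    have hSa : S a c = T a c := by simp [S, shiftColumnDown]
    calc jdtSlide (fuel + (d + 1)) T (a + (d + 1)) c
        = jdtSlide (fuel + 1 + d) T (a + 1 + d) c := by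
          rw [Nat.add_right_comm fuel, Nat.add_right_comm a]; rfl
      _ = jdtSlide (fuel + 1) S (a + 1) c :=
          ih (by rwa [Nat.add_right_comm, Nat.add_assoc])
            (fun p _ _ => hpath p (by omega) (by omega)) _
      _ = jdtSlide fuel (setEntry (setEntry S (a + 1) c (S a c)) a c 0) a c := by
          refine jdtSlide_succ_up (hSa ▸ (hpath a le_rfl (by omega)).1) fun hc => ?_
          have hS : S (a + 1) (c - 1) = T (a + 1) (c - 1) := by grind [shiftColumnDown]
          exact hSa ▸ hS ▸ (hpath a le_rfl (by omega)).2 hc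
      _ = jdtSlide fuel (shiftColumnDown T c a (d + 1)) a c := by
          congr 1
          funext p q
          simp only [setEntry, S, shiftColumnDown]
          grind

theorem jdtSlide_shiftRowRight {T : ℕ → ℕ → ℕ} {i a d : ℕ} (hhole : T i (a + d) = 0)
    (hpath : ∀ q, a ≤ q → q < a + d → 0 < T i q ∧ (i ≠ 0 → T (i - 1) (q + 1) < T i q))
    (fuel : ℕ) :
    jdtSlide (fuel + d) T i (a + d) = jdtSlide fuel (shiftRowRight T i a d) i a := by
  induction d generalizing a fuel with
  | zero =>
    congr 1
    funext p q
    simp only [shiftRowRight]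
    grind
  | succ d ih =>
    set S := shiftRowRight T i (a + 1) d
    have hSa : S i a = T i a := by simp [S, shiftRowRight]
    calc jdtSlide (fuel + (d + 1)) T i (a + (d + 1))
        = jdtSlide (fuel + 1 + d) T i (a + 1 + d) := by
          rw [Nat.add_right_comm fuel, Nat.add_right_comm a]; rfl
      _ = jdtSlide (fuel + 1) S i (a + 1) :=
          ih (by rwa [Nat.add_right_comm, Nat.add_assoc])
            (fun q _ _ => hpath q (by omega) (by omega)) _
      _ = jdtSlide fuel (setEntry (setEntry S i (a + 1) (S i a)) i a 0) i a := by
          refine jdtSlide_succ_left (hSa ▸ (hpath a le_rfl (by omega)).1) fun hi => ?_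
          have hS : S (i - 1) (a + 1) = T (i - 1) (a + 1) := by grind [shiftRowRight]
          exact hSa ▸ hS ▸ (hpath a le_rfl (by omega)).2 hi
      _ = jdtSlide fuel (shiftRowRight T i a (d + 1)) i a := by
          congr 1
          funext p q
          simp only [setEntry, S, shiftRowRight]
          grind

theorem add_lt_of_lt_of_chain {l : ℕ → ℕ} {r s : ℕ}
    (hl : ∀ j, j + 1 < s → l j + r < l (j + 1)) {a b : ℕ} (hab : a < b) (hb : b < s) :
    l a + r < l b := by
  induction b, hab using Nat.le_induction with
  | base => exact hl a hb
  | succ b _ ih =>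
    have := ih (by omega)
    have := hl b hb
    omega

/-- The tableau after `k + t` promotions: rows above `t` are finished, and in the other rows
the last column has not yet moved. -/
def stage (l : ℕ → ℕ) (r s k t : ℕ) : ℕ → ℕ → ℕ :=
  fun i j => if i ≤ r ∧ j < s then
    (if i < t then (if j = 0 then i + 1 else l (j - 1) + i + k + t)
     else if j = s - 1 then l (s - 1) + i + k else l j + i + k + t)
  else 0

theorem promotion_stage_zero {l : ℕ → ℕ} {r s k m : ℕ}
    (hl : ∀ a b, a < b → b < s → l a + r < l b) (hm : m < k) :
    promotion (r + 1) s (l (s - 1) + r + k) (stage l r s m 0) = stage l r s (m + 1) 0 := by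
  rw [promotion_of_forall_ne fun p _ q hq => ?_]
  · funext i j
    simp only [stage]
    split_ifs <;> omega
  · have := hl q (s - 1)
    simp only [stage]
    split_ifs <;> omega

theorem removeAndSlide_stage {l : ℕ → ℕ} {r s k t : ℕ} (hs : 0 < s) (ht : t ≤ r)
    (hl1 : ∀ j < s, 1 ≤ l j) (hl : ∀ a b, a < b → b < s → l a + r < l b) :
    removeAndSlide (stage l r s k t) (r, s - 1) =
      shiftColumnDown (shiftRowRight (shiftColumnDown (setEntry (stage l r s k t) r (s - 1) 0)
        (s - 1) t (r - t)) t 0 (s - 1)) 0 0 t := by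
  have hcol := jdtSlide_shiftColumnDown (T := setEntry (stage l r s k t) r (s - 1) 0)
    (c := s - 1) (a := t) (d := r - t) (by grind [setEntry]) (fun p _ _ => by
      have := hl (s - 1 - 1) (s - 1)
      grind [setEntry, stage]) (1 + t + (s - 1))
  have hrow := jdtSlide_shiftRowRight (i := t) (a := 0) (d := s - 1)
    (T := shiftColumnDown (setEntry (stage l r s k t) r (s - 1) 0) (s - 1) t (r - t))
    (by grind [shiftColumnDown]) (fun q _ hq => by
      have := hl1 q (by omega)
      grind [setEntry, stage, shiftColumnDown]) (1 + t)
  have hcol0 := jdtSlide_shiftColumnDown (c := 0) (a := 0) (d := t)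
    (T := shiftRowRight (shiftColumnDown (setEntry (stage l r s k t) r (s - 1) 0)
        (s - 1) t (r - t)) t 0 (s - 1))
    (by grind [shiftRowRight]) (fun p _ hp => by
      grind [setEntry, stage, shiftColumnDown, shiftRowRight]) 1
  rw [Nat.add_sub_cancel' ht] at hcol
  rw [Nat.zero_add] at hrow hcol0
  rw [removeAndSlide, show r + (s - 1) + 1 = 1 + t + (s - 1) + (r - t) by omega,
    hcol, hrow, hcol0, jdtSlide_zero_zero]

theorem stage_eq_max_iff {l : ℕ → ℕ} {r s k t : ℕ} (hs : 0 < s) (ht : t ≤ r)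
    (hl1 : ∀ j < s, 1 ≤ l j) (hl : ∀ a b, a < b → b < s → l a + r < l b)
    (y : ℕ × ℕ) :
    y.1 < r + 1 ∧ y.2 < s ∧ stage l r s k t y.1 y.2 = l (s - 1) + r + k ↔ y = (r, s - 1) := by
  obtain ⟨i, j⟩ := y
  have := hl1 (s - 1) (by omega)
  have := hl (j - 1) (s - 1)
  have := hl j (s - 1)
  simp only [stage, Prod.mk.injEq]
  split_ifs <;> omega

theorem promotion_stage_succ {l : ℕ → ℕ} {r s k t : ℕ} (hs : 0 < s) (ht : t ≤ r)
    (hl1 : ∀ j < s, 1 ≤ l j) (hl : ∀ a b, a < b → b < s → l a + r < l b) :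
    promotion (r + 1) s (l (s - 1) + r + k) (stage l r s k t) = stage l r s k (t + 1) := by
  rw [promotion_of_unique_max (stage_eq_max_iff hs ht hl1 hl), removeAndSlide_stage hs ht hl1 hl]
  funext i j
  simp only [stage, setEntry, shiftColumnDown, shiftRowRight]
  grind

theorem Function.iterate_eq_of_forall_lt {α : Type*} {f : α → α} {g : ℕ → α} {N : ℕ}
    (h : ∀ m < N, f (g m) = g (m + 1)) {m : ℕ} (hm : m ≤ N) : f^[m] (g 0) = g m := by
  induction m with
  | zero => rfl
  | succ m ih => rw [Function.iterate_succ_apply', ih (by omega), h m (by omega)]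

/-- let `T` be the `(r+1) × s` rectangular tableau whose `j`-th
column (0-indexed) consists of the consecutive entries `l j, l j + 1, …,
l j + r`, where the `l j` are positive, `l j + r < l (j+1)`, and
`l (s-1) + r ≤ n`.  Then `pr^{n - (l_s + r) + (r+1)}(T)` has first column
`1, 2, …, r+1`, and its column `j+1` consists of the entries of column `j` of
`T`, each increased by `n - (l_s + r) + (r+1)`. -/
theorem promotion_consecutive_columns (n r s : ℕ) (hs : 0 < s)
    (l : ℕ → ℕ) (hl1 : ∀ j, j < s → 1 ≤ l j)
    (hl2 : ∀ j, j + 1 < s → l j + r < l (j + 1))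
    (hln : l (s - 1) + r ≤ n)
    (T : ℕ → ℕ → ℕ)
    (hT : T = fun i j => if i ≤ r ∧ j < s then l j + i else 0) :
    (promotion (r + 1) s n)^[n - (l (s - 1) + r) + (r + 1)] T =
      fun i j =>
        if i ≤ r ∧ j < s then
          (if j = 0 then i + 1
           else l (j - 1) + i + (n - (l (s - 1) + r) + (r + 1)))
        else 0 := by
  obtain ⟨k, rfl⟩ : ∃ k, n = l (s - 1) + r + k := ⟨n - (l (s - 1) + r), by omega⟩
  have hl a b (hab : a < b) (hb : b < s) : l a + r < l b := add_lt_of_lt_of_chain hl2 hab hb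
  have hT0 : T = stage l r s 0 0 := by
    subst hT
    funext i j
    simp only [stage]
    grind
  have hshift : (promotion (r + 1) s _)^[k] (stage l r s 0 0) = stage l r s k 0 :=
    Function.iterate_eq_of_forall_lt (g := fun m => stage l r s m 0)
      (fun _ hm => promotion_stage_zero hl hm) le_rfl
  have hslide : (promotion (r + 1) s _)^[r + 1] (stage l r s k 0) = stage l r s k (r + 1) :=
    Function.iterate_eq_of_forall_lt (N := r + 1)
      (fun _ ht => promotion_stage_succ hs (Nat.le_of_lt_succ ht) hl1 hl) le_rfl
  rw [Nat.add_sub_cancel_left, Nat.add_comm k, Function.iterate_add_apply, hT0, hshift, hslide]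
  funext i j
  simp only [stage]
  split_ifs <;> omega
end

section
/- Row insertion of a letter into a semistandard Young tableau produces a semistandard Young tableau whose shape is obtained from the original shape by adding exactly one box. -/
/-- RSK row insertion of `k` into a tableau (a list of rows, top row first):
find the leftmost cell of the first row whose value is strictly greater than
`k`; if none exists append `k` to the row, otherwise replace it by `k` and
insert the bumped value into the next row by the same rule. -/
def insertTab : List (List ℕ) → ℕ → List (List ℕ)
  | [], k => [[k]]
  | row :: rest, k =>
    match row.findIdx? (fun x => decide (k < x)) with
    | none => (row ++ [k]) :: rest
    | some i => row.set i k :: insertTab rest (row.getD i 0)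

/-- `T` is a semistandard Young tableau: row lengths weakly decrease (so the
shape is a partition), rows are weakly increasing, and columns are strictly
increasing. -/
def IsSSYTList (T : List (List ℕ)) : Prop :=
  (∀ row ∈ T, row ≠ []) ∧
  (∀ i, i + 1 < T.length → (T.getD (i + 1) []).length ≤ (T.getD i []).length) ∧
  (∀ row ∈ T, row.Chain' (· ≤ ·)) ∧
  (∀ i j, i + 1 < T.length → j < (T.getD (i + 1) []).length →
    (T.getD i []).getD j 0 < (T.getD (i + 1) []).getD j 0)

/-!
Say that `a` is placed at position `p` of a row when the `p`-th entry is overwritten by `a` (or `a`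
is appended, if `p` is the row length) and all entries left of `p` are `≤ a`. Row insertion places
`k` at the first position whose entry exceeds `k`, which keeps the row weakly increasing. When `k`
overwrites `b = r[i] > k`, the bumped `b` is placed in the next row at some `q`, and `q ≤ i`
because the entries there left of `q` are `≤ b`, while `b < r₁[i]`. Column `q` then gets an upper
entry `≤ k < b`, and every other column only lost value in its upper row, so columns stay strict
and the lower row stays no longer than the upper one. The shape grows by the single box at the row
where the insertion finally appends.
-/

namespace InsertTab

structure IsPlacement (r : List ℕ) (a p : ℕ) (r' : List ℕ) : Prop where
  le_length : p ≤ r.length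
  length_eq : r'.length = max r.length (p + 1)
  getD_self : r'.getD p 0 = a
  getD_of_ne : ∀ j ≠ p, r'.getD j 0 = r.getD j 0
  getD_le : ∀ j < p, r.getD j 0 ≤ a

def ColumnStrict (upper lower : List ℕ) : Prop :=
  lower.length ≤ upper.length ∧ ∀ j < lower.length, upper.getD j 0 < lower.getD j 0

theorem isPlacement_nil (a : ℕ) : IsPlacement [] a 0 [a] where
  le_length := le_rfl
  length_eq := rfl
  getD_self := rfl
  getD_of_ne j hj := by cases j <;> simp_all
  getD_le _ h := absurd h (Nat.not_lt_zero _)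

theorem isPlacement_of_findIdx?_eq_none {r : List ℕ} {a : ℕ}
    (h : r.findIdx? (fun x => decide (a < x)) = none) :
    IsPlacement r a r.length (r ++ [a]) where
  le_length := le_rfl
  length_eq := by simp
  getD_self := by simp [List.getD_eq_getElem?_getD]
  getD_of_ne j hj := by
    rcases lt_or_gt_of_ne hj with hj | hj
    · exact List.getD_append _ _ _ _ hj
    · rw [List.getD_eq_default _ _ (by rw [List.length_append, List.length_singleton]; omega), List.getD_eq_default _ _ hj.le]
  getD_le j hj := by
    rw [List.findIdx?_eq_none_iff] at h
    rw [List.getD_eq_getElem _ _ hj]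
    simpa using h _ (List.getElem_mem hj)

theorem isPlacement_of_findIdx?_eq_some {r : List ℕ} {a i : ℕ}
    (h : r.findIdx? (fun x => decide (a < x)) = some i) :
    IsPlacement r a i (r.set i a) ∧ i < r.length ∧ a < r.getD i 0 := by
  obtain ⟨hi, hlt, hmin⟩ := List.findIdx?_eq_some_iff_getElem.mp h
  refine ⟨⟨hi.le, by rw [List.length_set]; omega, ?_, ?_, ?_⟩, hi, ?_⟩
  · simp [List.getD_eq_getElem?_getD, hi]
  · intro j hj
    simp [List.getD_eq_getElem?_getD, Ne.symm hj]
  · intro j hj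
    rw [List.getD_eq_getElem _ _ (hj.trans hi)]
    simpa using hmin j hj
  · rw [List.getD_eq_getElem _ _ hi]
    simpa using hlt

theorem IsPlacement.isChain {r r' : List ℕ} {a p : ℕ} (h : IsPlacement r a p r')
    (hr : r.IsChain (· ≤ ·)) (hp : p < r.length → a ≤ r.getD p 0) :
    r'.IsChain (· ≤ ·) := by
  rw [List.isChain_iff_getElem] at hr ⊢
  intro j hj
  have hr' : ∀ j (hj : j + 1 < r.length), r.getD j 0 ≤ r.getD (j + 1) 0 := fun j hj => by
    rw [List.getD_eq_getElem _ _ hj, List.getD_eq_getElem _ _ (Nat.lt_of_succ_lt hj)]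
    exact hr j hj
  rw [← List.getD_eq_getElem _ 0, ← List.getD_eq_getElem _ 0]
  have := h.length_eq
  have := h.le_length
  by_cases hjp : j = p
  · subst hjp
    rw [h.getD_self, h.getD_of_ne _ (by omega)]
    exact (hp (by omega)).trans (hr' j (by omega))
  by_cases hjp' : j + 1 = p
  · subst hjp'
    rw [h.getD_self, h.getD_of_ne _ hjp]
    exact h.getD_le j (by omega)
  rw [h.getD_of_ne _ hjp, h.getD_of_ne _ hjp']
  exact hr' j (by omega)

theorem ColumnStrict.of_isPlacement_upper {r r' r₁ : List ℕ} {a p : ℕ}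
    (hc : ColumnStrict r r₁) (h : IsPlacement r a p r') (hp : r₁.length ≤ p) :
    ColumnStrict r' r₁ := by
  refine ⟨?_, fun j hj => ?_⟩
  · rw [h.length_eq]; exact hc.1.trans (le_max_left _ _)
  · rw [h.getD_of_ne j (by omega)]; exact hc.2 j hj

theorem ColumnStrict.of_isPlacement_bump {r r' r₁ r₁' : List ℕ} {k i q : ℕ}
    (hc : ColumnStrict r r₁) (h : IsPlacement r k i r') (hi : i < r.length)
    (hk : k < r.getD i 0) (h₁ : IsPlacement r₁ (r.getD i 0) q r₁') :
    ColumnStrict r' r₁' := by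
  obtain ⟨hlen, hlt⟩ := hc
  have hqi : q ≤ i := by
    by_contra! hiq
    have := hlt i (by have := h₁.le_length; omega)
    have := h₁.getD_le i hiq
    omega
  refine ⟨by rw [h.length_eq, h₁.length_eq]; omega, fun j hj => ?_⟩
  rw [h₁.length_eq] at hj
  by_cases hjq : j = q
  · subst hjq
    rw [h₁.getD_self]
    refine lt_of_le_of_lt ?_ hk
    rcases hqi.lt_or_eq with hji | rfl
    · rw [h.getD_of_ne j hji.ne]; exact h.getD_le j hji
    · exact h.getD_self.le
  · have hj₁ : j < r₁.length := by have := h₁.le_length; omega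
    rw [h₁.getD_of_ne j hjq]
    by_cases hji : j = i
    · subst hji; rw [h.getD_self]; exact hk.trans (hlt j hj₁)
    · rw [h.getD_of_ne j hji]; exact hlt j hj₁

theorem isSSYTList_nil : IsSSYTList [] := by
  simp [IsSSYTList]

theorem isSSYTList_cons_iff {row : List ℕ} {rest : List (List ℕ)} :
    IsSSYTList (row :: rest) ↔ row ≠ [] ∧ row.IsChain (· ≤ ·) ∧
      ColumnStrict row (rest.getD 0 []) ∧ IsSSYTList rest := by
  constructor
  · rintro ⟨hne, hlen, hchain, hcol⟩
    refine ⟨hne _ (by simp), hchain _ (by simp), ?_, ?_⟩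
    · rcases rest with _ | ⟨row₁, rest⟩
      · simp [ColumnStrict]
      · exact ⟨hlen 0 (by simp), fun j => hcol 0 j (by simp)⟩
    · refine ⟨fun r hr => hne r (by simp [hr]), fun i hi => hlen (i + 1) (by simpa),
        fun r hr => hchain r (by simp [hr]), fun i j hi => hcol (i + 1) j (by simpa)⟩
  · rintro ⟨hne, hchain, ⟨hlen₀, hcol₀⟩, hne', hlen, hchain', hcol⟩
    refine ⟨?_, fun i hi => ?_, ?_, fun i j hi => ?_⟩
    · simpa [hne] using hne'
    · cases i with
      | zero => exact hlen₀
      | succ i => exact hlen i (by simpa using hi)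
    · exact List.forall_mem_cons.mpr ⟨hchain, hchain'⟩
    · cases i with
      | zero => exact hcol₀ j
      | succ i => exact hcol i j (by simpa using hi)

theorem exists_isPlacement_insertTab (T : List (List ℕ)) (k : ℕ) :
    ∃ p, IsPlacement (T.getD 0 []) k p ((insertTab T k).getD 0 []) := by
  rcases T with _ | ⟨row, rest⟩
  · exact ⟨0, isPlacement_nil k⟩
  cases h : row.findIdx? (fun x => decide (k < x)) with
  | none => exact ⟨_, by simpa [insertTab, h] using isPlacement_of_findIdx?_eq_none h⟩
  | some i => exact ⟨i, by simpa [insertTab, h] using (isPlacement_of_findIdx?_eq_some h).1⟩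

theorem sum_length_insertTab (T : List (List ℕ)) (k : ℕ) :
    ((insertTab T k).map List.length).sum = (T.map List.length).sum + 1 := by
  induction T generalizing k with
  | nil => simp [insertTab]
  | cons row rest ih =>
    cases h : row.findIdx? (fun x => decide (k < x)) with
    | none =>
      simp only [insertTab, h, List.map_cons, List.sum_cons, List.length_append,
        List.length_singleton]
      omega
    | some i =>
      simp only [insertTab, h, List.map_cons, List.sum_cons, List.length_set, ih]
      omega

theorem length_getD_le_insertTab (T : List (List ℕ)) (k i : ℕ) :
    (T.map List.length).getD i 0 ≤ ((insertTab T k).map List.length).getD i 0 := by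
  induction T generalizing k i with
  | nil => cases i <;> simp [insertTab]
  | cons row rest ih =>
    cases h : row.findIdx? (fun x => decide (k < x)) with
    | none => cases i <;> simp [insertTab, h]
    | some j =>
      cases i with
      | zero => simp [insertTab, h]
      | succ i => simpa only [insertTab, h, List.map_cons, List.getD_cons_succ] using ih _ i

theorem isSSYTList_insertTab {T : List (List ℕ)} (hT : IsSSYTList T) (k : ℕ) :
    IsSSYTList (insertTab T k) := by
  induction T generalizing k with
  | nil => simpa [insertTab, isSSYTList_cons_iff, ColumnStrict] using isSSYTList_nil
  | cons row rest ih =>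
    obtain ⟨-, hchain, hcol, hrest⟩ := isSSYTList_cons_iff.mp hT
    cases h : row.findIdx? (fun x => decide (k < x)) with
    | none =>
      have hp := isPlacement_of_findIdx?_eq_none h
      simp only [insertTab, h, isSSYTList_cons_iff]
      exact ⟨by simp, hp.isChain hchain (absurd · (lt_irrefl _)),
        hcol.of_isPlacement_upper hp hcol.1, hrest⟩
    | some i =>
      obtain ⟨hp, hi, hk⟩ := isPlacement_of_findIdx?_eq_some h
      obtain ⟨q, hq⟩ := exists_isPlacement_insertTab rest (row.getD i 0)
      simp only [insertTab, h, isSSYTList_cons_iff]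
      exact ⟨List.ne_nil_of_length_pos (by simpa using hi.pos), hp.isChain hchain fun _ => hk.le,
        hcol.of_isPlacement_bump hp hi hk hq, ih hrest _⟩

end InsertTab

open InsertTab in
theorem insertTab_ssyt_general (T : List (List ℕ)) (hT : IsSSYTList T)
    (k : ℕ) :
    IsSSYTList (insertTab T k) ∧
      ((insertTab T k).map List.length).sum = (T.map List.length).sum + 1 ∧
      (∀ i, (T.map List.length).getD i 0 ≤
        ((insertTab T k).map List.length).getD i 0) :=
  ⟨isSSYTList_insertTab hT k, sum_length_insertTab T k, length_getD_le_insertTab T k⟩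

/-- row insertion of a letter into a semistandard Young tableau
produces a semistandard Young tableau whose shape is obtained from the
original shape by adding exactly one box. -/
theorem insertTab_ssyt (T : List (List ℕ)) (hT : IsSSYTList T)
    (k : ℕ) (hk : 0 < k) :
    IsSSYTList (insertTab T k) ∧
      ((insertTab T k).map List.length).sum = (T.map List.length).sum + 1 ∧
      (∀ i, (T.map List.length).getD i 0 ≤
        ((insertTab T k).map List.length).getD i 0) :=
  insertTab_ssyt_general T hT k
end

section
/- Suppose a finite graph G admits a graph automorphism p, and let A be a set of positive integers with gcd(A) = d such that for each a in A there is some vertex w_a connected (by a path) in G to p^a(w_a), and every vertex is connected to some power of p applied to a fixed vertex v0. Then v0 is connected in G to p^d(v0). -/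
/-- let `G` be a finite graph and `p` a graph automorphism.
Suppose `A` is a finite set of positive integers with `gcd A = d` such that
for each `a ∈ A` there is a vertex `w_a` connected to `p^a(w_a)`, and suppose
every vertex is connected to `p^j(v0)` for some `j ≥ 0` and a fixed vertex
`v0`.  Then `v0` is connected to `p^d(v0)`. -/
theorem reachable_pow_gcd (V : Type*) [Fintype V] (G : SimpleGraph V)
    (p : Equiv.Perm V) (hp : ∀ x y : V, G.Adj (p x) (p y) ↔ G.Adj x y)
    (A : Finset ℕ) (hA : ∀ a ∈ A, 0 < a) (d : ℕ) (hd : A.gcd id = d)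
    (hwa : ∀ a ∈ A, ∃ w : V, G.Reachable w ((p ^ a) w))
    (v0 : V) (hv0 : ∀ x : V, ∃ j : ℕ, G.Reachable x ((p ^ j) v0)) :
    G.Reachable v0 ((p ^ d) v0) := by
  classical
  -- the subgroup of automorphisms of G inside Perm V
  let H : Subgroup (Equiv.Perm V) :=
    { carrier := {q | ∀ x y : V, G.Adj (q x) (q y) ↔ G.Adj x y}
      one_mem' := by intro x y; simp
      mul_mem' := by
        intro q r hq hr x y
        simp only [Equiv.Perm.mul_apply]
        rw [hq, hr]
      inv_mem' := by
        intro q hq x y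
        rw [← hq (q⁻¹ x) (q⁻¹ y)]
        simp }
  have hpH : p ∈ H := hp
  have hmap : ∀ q : Equiv.Perm V, q ∈ H → ∀ x y : V,
      G.Reachable x y → G.Reachable (q x) (q y) := by
    intro q hq x y hxy
    exact hxy.map ⟨⇑q, fun {a b} h => (hq a b).mpr h⟩
  -- the additive subgroup of ℤ
  let T : AddSubgroup ℤ :=
    { carrier := {n | G.Reachable v0 ((p ^ n) v0)}
      zero_mem' := by simpa using SimpleGraph.Reachable.refl v0
      add_mem' := by
        intro m n hm hn
        have h1 := hmap (p ^ m) (H.zpow_mem hpH m) _ _ hn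
        rw [← Equiv.Perm.mul_apply, ← zpow_add] at h1
        exact hm.trans h1
      neg_mem' := by
        intro n hn
        have h1 := hmap (p ^ (-n)) (H.zpow_mem hpH (-n)) _ _ hn
        rw [← Equiv.Perm.mul_apply, ← zpow_add, neg_add_cancel, zpow_zero] at h1
        simpa using h1.symm }
  have haT : ∀ a ∈ A, ((a : ℤ)) ∈ T := by
    intro a ha
    obtain ⟨w, hw⟩ := hwa a ha
    obtain ⟨j, hj⟩ := hv0 w
    -- p^j v0 reachable to p^(a+j) v0
    have hj' : G.Reachable w ((p ^ (j : ℤ)) v0) := by rw [zpow_natCast]; exact hj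
    have hw' : G.Reachable w ((p ^ (a : ℤ)) w) := by rw [zpow_natCast]; exact hw
    have h1 : G.Reachable ((p ^ (j : ℤ)) v0) ((p ^ ((a : ℤ) + j)) v0) := by
      have h2 := hmap (p ^ (a : ℤ)) (H.zpow_mem hpH _) _ _ hj'
      rw [← Equiv.Perm.mul_apply, ← zpow_add] at h2
      exact (hj'.symm.trans hw').trans h2
    have h3 := hmap (p ^ (-(j : ℤ))) (H.zpow_mem hpH _) _ _ h1
    rw [← Equiv.Perm.mul_apply, ← zpow_add, ← Equiv.Perm.mul_apply, ← zpow_add,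
      neg_add_cancel, zpow_zero] at h3
    have he : -(j : ℤ) + ((a : ℤ) + j) = (a : ℤ) := by ring
    rw [he] at h3
    exact (by simpa using h3 : G.Reachable v0 ((p ^ (a : ℤ)) v0))
  have hgcd : ∀ s : Finset ℕ, (∀ a ∈ s, ((a : ℤ)) ∈ T) → (((s.gcd id : ℕ) : ℤ)) ∈ T := by
    intro s
    induction s using Finset.induction_on with
    | empty => intro _; simpa using T.zero_mem
    | @insert a s ha ih =>
      intro hmem
      have haT' := hmem a (Finset.mem_insert_self _ _)
      have hgT := ih fun b hb => hmem b (Finset.mem_insert_of_mem hb)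
      rw [Finset.gcd_insert]
      set g := s.gcd id with hg
      have hbez : ((Nat.gcd a g : ℤ)) =
          (a : ℤ) * Int.gcdA a g + (g : ℤ) * Int.gcdB a g := by
        rw [← Int.gcd_natCast_natCast, Int.gcd_eq_gcd_ab]
      show ((Nat.gcd (id a) g : ℤ)) ∈ T
      simp only [id]
      rw [hbez]
      refine T.add_mem ?_ ?_
      · rw [mul_comm, ← smul_eq_mul]; exact T.zsmul_mem haT' _
      · rw [mul_comm, ← smul_eq_mul]; exact T.zsmul_mem hgT _
  have hdT := hgcd A haT
  rw [hd] at hdT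
  have : G.Reachable v0 ((p ^ (d : ℤ)) v0) := hdT
  rwa [zpow_natCast] at this
end

section
/- If G is a finite graph with an automorphism p of order n such that (a) every vertex is connected to p^j(v0) for some j and a fixed vertex v0, and (b) v0 is connected to p^d(v0) where d divides n, and (c) there is a surjective labeling c : V(G) -> Z/dZ constant on connected components with c(p(x)) = c(x) - 1, then G has exactly d connected components, each equal to a fiber of c. -/
/-- let `G` be a finite graph with an automorphism `p` with
`p^n = 1` (`n > 0`), a fixed vertex `v0` and `d ∣ n` such that:
(a) every vertex is connected to `p^j(v0)` for some `j`;
(b) `v0` is connected to `p^d(v0)`;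
(c) there is a surjective labeling `c : V → ZMod d` which is constant on
edges (hence on connected components) and satisfies `c (p x) = c x - 1`.
Then the connected components of `G` are exactly the fibers of `c`, so `G`
has exactly `d` connected components. -/
theorem components_eq_fibers (V : Type*) [Fintype V] (G : SimpleGraph V)
    [Fintype G.ConnectedComponent]
    (p : Equiv.Perm V) (hp : ∀ x y : V, G.Adj (p x) (p y) ↔ G.Adj x y)
    (n : ℕ) (hn : 0 < n) (hpn : p ^ n = 1)
    (v0 : V) (d : ℕ) (hdn : d ∣ n)
    (c : V → ZMod d)
    (hedge : ∀ x y : V, G.Adj x y → c x = c y)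
    (hshift : ∀ x : V, c (p x) = c x - 1)
    (hsurj : Function.Surjective c)
    (ha : ∀ x : V, ∃ j : ℕ, G.Reachable x ((p ^ j) v0))
    (hb : G.Reachable v0 ((p ^ d) v0)) :
    (∀ x y : V, G.Reachable x y ↔ c x = c y) ∧
      Fintype.card G.ConnectedComponent = d := by
  -- c is constant on reachability classes
  have hconst : ∀ x y : V, G.Reachable x y → c x = c y := by
    intro x y hr
    obtain ⟨w⟩ := hr
    induction w with
    | nil => rfl
    | cons hadj _ ih => exact (hedge _ _ hadj).trans ih
  -- p preserves reachability
  have hpre : ∀ x y : V, G.Reachable x y → G.Reachable (p x) (p y) := by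
    intro x y hr
    obtain ⟨w⟩ := hr
    induction w with
    | nil => rfl
    | cons hadj _ ih => exact ((((hp _ _).mpr hadj)).reachable).trans ih
  have hpow : ∀ (j : ℕ) (x y : V), G.Reachable x y →
      G.Reachable ((p ^ j) x) ((p ^ j) y) := by
    intro j
    induction j with
    | zero => simpa using fun x y h => h
    | succ k ih =>
      intro x y h
      simp only [pow_succ, Equiv.Perm.mul_apply]
      exact ih _ _ (hpre _ _ h)
  -- v0 reachable to p^(k*d) v0
  have hmul : ∀ k : ℕ, G.Reachable v0 ((p ^ (k * d)) v0) := by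
    intro k
    induction k with
    | zero => simpa using SimpleGraph.Reachable.refl v0
    | succ m ih =>
      have h2 : G.Reachable ((p ^ (m * d)) v0) ((p ^ (m * d)) ((p ^ d) v0)) :=
        hpow _ _ _ hb
      have : ((p ^ (m * d)) ((p ^ d) v0)) = (p ^ ((m + 1) * d)) v0 := by
        rw [← Equiv.Perm.mul_apply, ← pow_add]
        ring_nf
      rw [this] at h2
      exact ih.trans h2
  -- c of p^j
  have hcpow : ∀ (j : ℕ) (x : V), c ((p ^ j) x) = c x - (j : ZMod d) := by
    intro j
    induction j with
    | zero => simp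
    | succ k ih =>
      intro x
      have : ((p ^ (k + 1)) x) = p ((p ^ k) x) := by
        rw [pow_succ']
        rfl
      rw [this, hshift, ih]
      push_cast
      ring
  -- key: if d ∣ k - j and j ≤ k then p^j v0 reachable p^k v0
  have hkey : ∀ j k : ℕ, j ≤ k → (d : ℕ) ∣ k - j →
      G.Reachable ((p ^ j) v0) ((p ^ k) v0) := by
    intro j k hjk hdvd
    obtain ⟨m, hm⟩ := hdvd
    have hk : k = j + d * m := by omega
    have h1 := hpow j _ _ (hmul m)
    rw [hk]
    have h2 : (p ^ (j + d * m)) v0 = (p ^ j) ((p ^ (m * d)) v0) := by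
      rw [← Equiv.Perm.mul_apply, ← pow_add, Nat.mul_comm]
    rw [h2]
    exact h1
  have main : ∀ x y : V, G.Reachable x y ↔ c x = c y := by
    intro x y
    constructor
    · exact hconst x y
    · intro hcxy
      obtain ⟨j, hj⟩ := ha x
      obtain ⟨k, hk⟩ := ha y
      have hcast : ((j : ZMod d)) = (k : ZMod d) := by
        have h1 := hconst _ _ hj
        have h2 := hconst _ _ hk
        rw [hcpow] at h1 h2
        have : c v0 - (j : ZMod d) = c v0 - (k : ZMod d) := by
          rw [← h1, ← h2, hcxy]
        linear_combination -this
      have hmod : j ≡ k [MOD d] := (ZMod.natCast_eq_natCast_iff _ _ _).mp hcast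
      have hjk : G.Reachable ((p ^ j) v0) ((p ^ k) v0) := by
        rcases le_total j k with h | h
        · exact hkey j k h ((Nat.modEq_iff_dvd' h).mp hmod)
        · exact (hkey k j h ((Nat.modEq_iff_dvd' h).mp hmod.symm)).symm
      exact (hj.trans hjk).trans hk.symm
  refine ⟨main, ?_⟩
  have hd0 : d ≠ 0 := by
    rintro rfl
    exact absurd (zero_dvd_iff.mp hdn) hn.ne'
  haveI : NeZero d := ⟨hd0⟩
  let f : G.ConnectedComponent → ZMod d :=
    SimpleGraph.ConnectedComponent.lift c fun v w q _ => hconst v w ⟨q⟩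
  have hbij : Function.Bijective f := by
    constructor
    · intro a b
      refine SimpleGraph.ConnectedComponent.ind₂ (fun x y h => ?_) a b
      exact SimpleGraph.ConnectedComponent.sound ((main x y).mpr h)
    · intro z
      obtain ⟨x, hx⟩ := hsurj z
      exact ⟨G.connectedComponentMk x, hx⟩
  rw [Fintype.card_of_bijective hbij, ZMod.card]
end

section
/- Let w be a permutation word of {1,...,n} such that for some indices i <= j, the descent set of w intersected with {i,...,j} equals {j}, i.e., within the letters i,...,j+1 the word restricted to these letters reads i, i+1, ..., c-1, j+1, c, c+1, ..., j for some c with i <= c <= j. Then the sequence of elementary dual Knuth moves t_j, t_{j-1}, ..., t_i (swapping j+1 with j, then j with j-1, etc., skipping non-applicable swaps) transforms the restriction to the alphabet {i,...,j+1} into the word (i+1), (i+2), ..., c, (c+1), i, (c+2), ..., j, (j+1); that is, the entries c+1,...,j+1 are cyclically shifted down by one and the entries i,...,c are cyclically shifted down by one. -/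
/-!
The moves split into two runs. Under `t_j, …, t_{c+1}` the letter standing where `j + 1` stood
is lowered step by step to `c + 1`, and `t_m` is legal because `m - 1` lies between `m + 1` and
`m`. Under `t_{c-1}, …, t_i` the letter standing where `c` stood is lowered to `i`, and `t_m` is
legal because `m + 2` lies between `m` and `m + 1`. Each run cyclically shifts one block of
values, and the two shifts compose to the claimed word.
-/

open Finset

/-- The descent set of a permutation word of `{1,…,n}`, recorded via the
position function `pos` (value ↦ position): `a` is a descent iff `a+1`
appears to the left of `a`. -/
def descSet (n : ℕ) (pos : ℕ → ℕ) : Finset ℕ :=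
  (Icc 1 (n - 1)).filter fun a => pos (a + 1) < pos a

/-- The elementary dual Knuth move `t_a`: swap the values `a` and `a+1`
(i.e. exchange their positions), subject to the requirement that the descent
sets before and after the swap are incomparable under inclusion. -/
def DKMove (n a : ℕ) (p q : ℕ → ℕ) : Prop :=
  1 ≤ a ∧ a + 1 ≤ n ∧
    q = Function.update (Function.update p a (p (a + 1))) (a + 1) (p a) ∧
    ¬ descSet n p ⊆ descSet n q ∧ ¬ descSet n q ⊆ descSet n p

/-- A chain of dual Knuth moves with the given list of labels. -/
def DKChain (n : ℕ) : (ℕ → ℕ) → List ℕ → (ℕ → ℕ) → Prop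
  | p, [], q => q = p
  | p, a :: L, q => ∃ p', DKMove n a p p' ∧ DKChain n p' L q

open Function

lemma mem_descSet {n a : ℕ} {p : ℕ → ℕ} :
    a ∈ descSet n p ↔ 1 ≤ a ∧ a ≤ n - 1 ∧ p (a + 1) < p a := by
  simp [descSet, and_assoc]

lemma update_update_eq_comp_swap (p : ℕ → ℕ) (a : ℕ) :
    update (update p a (p (a + 1))) (a + 1) (p a) = p ∘ Equiv.swap a (a + 1) := by
  funext b
  simp only [update_apply, comp_apply, Equiv.swap_apply_def]
  split_ifs <;> first | rfl | omega

lemma dkMove_of_pred_between {n a : ℕ} {p : ℕ → ℕ} (ha : 2 ≤ a) (hn : a + 1 ≤ n)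
    (h₁ : p (a + 1) < p (a - 1)) (h₂ : p (a - 1) < p a) :
    DKMove n a p (p ∘ Equiv.swap a (a + 1)) := by
  have hpred : a - 1 ≠ a ∧ a - 1 ≠ a + 1 := by omega
  refine ⟨by omega, hn, (update_update_eq_comp_swap p a).symm, ?_, ?_⟩
  · refine Finset.not_subset.mpr ⟨a, ?_, ?_⟩ <;> simp [mem_descSet] <;> omega
  · refine Finset.not_subset.mpr ⟨a - 1, ?_, ?_⟩ <;>
      simp [mem_descSet, show a - 1 + 1 = a by omega, Equiv.swap_apply_of_ne_of_ne, hpred] <;> omega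

lemma dkMove_of_add_two_between {n a : ℕ} {p : ℕ → ℕ} (ha : 1 ≤ a) (hn : a + 2 ≤ n)
    (h₁ : p a < p (a + 2)) (h₂ : p (a + 2) < p (a + 1)) :
    DKMove n a p (p ∘ Equiv.swap a (a + 1)) := by
  refine ⟨ha, by omega, (update_update_eq_comp_swap p a).symm, ?_, ?_⟩
  · refine Finset.not_subset.mpr ⟨a + 1, ?_, ?_⟩ <;>
      simp [mem_descSet, Equiv.swap_apply_of_ne_of_ne, add_assoc] <;> omega
  · refine Finset.not_subset.mpr ⟨a, ?_, ?_⟩ <;> simp [mem_descSet] <;> omega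

lemma dkChain_append {n : ℕ} {p q r : ℕ → ℕ} {L₁ L₂ : List ℕ}
    (h₁ : DKChain n p L₁ q) (h₂ : DKChain n q L₂ r) : DKChain n p (L₁ ++ L₂) r := by
  induction L₁ generalizing p with
  | nil => cases (h₁ : q = p); exact h₂
  | cons a L ih =>
    obtain ⟨p', hmove, hchain⟩ := h₁
    exact ⟨p', hmove, ih hchain⟩

lemma dkChain_range'_reverse {n : ℕ} (w : ℕ → ℕ → ℕ) (lo k : ℕ)
    (hmove : ∀ m, lo ≤ m → m < lo + k → DKMove n m (w (m + 1)) (w m)) :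
    DKChain n (w (lo + k)) (List.range' lo k).reverse (w lo) := by
  induction k generalizing lo with
  | zero => rfl
  | succ k ih =>
    rw [List.range'_succ, List.reverse_cons, ← add_assoc, add_right_comm]
    refine dkChain_append (ih (lo + 1) fun m hm hmk => hmove m (by omega) (by omega)) ?_
    exact ⟨w lo, hmove lo le_rfl (by omega), rfl⟩

/-- `p ∘ rotateIcc lo hi` is the word `p` with the letter `hi` renamed `lo` and the letters
`lo, …, hi - 1` each raised by one. -/
def rotateIcc (lo hi : ℕ) (a : ℕ) : ℕ :=
  if a = lo then hi else if lo < a ∧ a ≤ hi then a - 1 else a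

lemma rotateIcc_self (a : ℕ) : rotateIcc a a = id := by
  funext b
  simp only [rotateIcc, id]
  split_ifs <;> omega

lemma rotateIcc_eq_comp_swap {lo hi : ℕ} (h : lo < hi) :
    rotateIcc lo hi = rotateIcc (lo + 1) hi ∘ Equiv.swap lo (lo + 1) := by
  funext b
  simp only [rotateIcc, comp_apply, Equiv.swap_apply_def]
  split_ifs <;> omega

lemma rotateIcc_apply_of_lt {lo hi a : ℕ} (h : a < lo) : rotateIcc lo hi a = a := by
  simp only [rotateIcc]; split_ifs <;> omega

lemma rotateIcc_apply_add_one {lo hi a : ℕ} (h₁ : lo ≤ a) (h₂ : a < hi) :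
    rotateIcc lo hi (a + 1) = a := by
  simp only [rotateIcc]; split_ifs <;> omega

lemma rotateIcc_apply_of_gt {lo hi a : ℕ} (h₁ : lo ≤ hi) (h₂ : hi < a) :
    rotateIcc lo hi a = a := by
  simp only [rotateIcc]; split_ifs <;> omega

@[simp]
lemma rotateIcc_apply_left (lo hi : ℕ) : rotateIcc lo hi lo = hi := by
  simp [rotateIcc]

section Phases

variable {n i j c : ℕ} {pos : ℕ → ℕ}

lemma dkChain_shift_top (hc : 1 ≤ c) (hcj : c ≤ j) (hjn : j + 1 ≤ n) (h3 : pos (j + 1) < pos c)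
    (h4 : ∀ a, c ≤ a → a < j → pos a < pos (a + 1)) :
    DKChain n pos (List.range' (c + 1) (j - c)).reverse (pos ∘ rotateIcc (c + 1) (j + 1)) := by
  have hmono : MonotoneOn pos (Set.Icc c j) :=
    (strictMonoOn_of_lt_add_one Set.ordConnected_Icc
      fun a _ ha ha1 => h4 a ha.1 ha1.2).monotoneOn
  have hchain := dkChain_range'_reverse (n := n) (fun m => pos ∘ rotateIcc m (j + 1)) (c + 1)
    (j - c) fun m hm hmj => by
      rw [rotateIcc_eq_comp_swap (by omega : m < j + 1), ← comp_assoc]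
      refine dkMove_of_pred_between (by omega) (by omega) ?_ ?_ <;>
        simp only [comp_apply, rotateIcc_apply_left,
          rotateIcc_apply_of_lt (show m - 1 < m + 1 by omega),
          rotateIcc_apply_of_lt (show m < m + 1 by omega)]
      · exact h3.trans_le (hmono ⟨le_rfl, by omega⟩ ⟨by omega, by omega⟩ (by omega))
      · simpa only [Nat.sub_add_cancel (by omega : 1 ≤ m)] using h4 (m - 1) (by omega) (by omega)
  rwa [show c + 1 + (j - c) = j + 1 by omega, rotateIcc_self, comp_id] at hchain

lemma dkChain_shift_bottom (hi : 1 ≤ i) (hic : i ≤ c) (hcj : c ≤ j) (hjn : j + 1 ≤ n)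
    (h1 : ∀ a, i ≤ a → a + 1 < c → pos a < pos (a + 1))
    (h2 : i < c → pos (c - 1) < pos (j + 1)) (h3 : pos (j + 1) < pos c) :
    DKChain n (pos ∘ rotateIcc (c + 1) (j + 1)) (List.range' i (c - i)).reverse
      (pos ∘ rotateIcc (c + 1) (j + 1) ∘ rotateIcc i c) := by
  have hmono : MonotoneOn pos (Set.Icc i (c - 1)) :=
    (strictMonoOn_of_lt_add_one Set.ordConnected_Icc
      fun a _ ha ha1 => h1 a ha.1 (by have := ha1.2; omega)).monotoneOn
  have hchain := dkChain_range'_reverse (n := n)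
    (fun m => pos ∘ rotateIcc (c + 1) (j + 1) ∘ rotateIcc m c) i (c - i) fun m him hmc => by
      rw [rotateIcc_eq_comp_swap (by omega : m < c)]
      have hm : rotateIcc (c + 1) (j + 1) (rotateIcc (m + 1) c m) = m := by
        rw [rotateIcc_apply_of_lt (show m < m + 1 by omega),
          rotateIcc_apply_of_lt (show m < c + 1 by omega)]
      have hm1 : rotateIcc (c + 1) (j + 1) (rotateIcc (m + 1) c (m + 1)) = c := by
        rw [rotateIcc_apply_left, rotateIcc_apply_of_lt (show c < c + 1 by omega)]
      have hm2 : pos (rotateIcc (c + 1) (j + 1) (rotateIcc (m + 1) c (m + 2))) =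
          if m + 1 < c then pos (m + 1) else pos (j + 1) := by
        split_ifs with hlt
        · rw [rotateIcc_apply_add_one le_rfl hlt,
            rotateIcc_apply_of_lt (show m + 1 < c + 1 by omega)]
        · rw [rotateIcc_apply_of_gt (show m + 1 ≤ c by omega) (show c < m + 2 by omega),
            show m + 2 = c + 1 by omega, rotateIcc_apply_left]
      refine dkMove_of_add_two_between (by omega) (by omega) ?_ ?_ <;>
        simp only [comp_apply, hm, hm1, hm2] <;> split_ifs with hlt
      · exact h1 m him hlt
      · simpa only [show c - 1 = m by omega] using h2 (by omega)
      · exact (hmono ⟨by omega, by omega⟩ ⟨by omega, le_rfl⟩ (by omega)).trans_lt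
          ((h2 (by omega)).trans h3)
      · exact h3
  rwa [show i + (c - i) = c by omega, rotateIcc_self, comp_id] at hchain

end Phases

theorem pcomb_dual_knuth_general (n i j c : ℕ) (pos : ℕ → ℕ)
    (hi : 1 ≤ i) (hic : i ≤ c) (hcj : c ≤ j) (hjn : j + 1 ≤ n)
    (h1 : ∀ a, i ≤ a → a + 1 < c → pos a < pos (a + 1))
    (h2 : i < c → pos (c - 1) < pos (j + 1))
    (h3 : pos (j + 1) < pos c)
    (h4 : ∀ a, c ≤ a → a < j → pos a < pos (a + 1))
    (pos' : ℕ → ℕ)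
    (hpos' : pos' = fun a =>
      if a = i then pos c
      else if i + 1 ≤ a ∧ a ≤ j + 1 then
        (if a = c + 1 then pos (j + 1) else pos (a - 1))
      else pos a) :
    ∃ L : List ℕ, L.Chain' (· > ·) ∧ (∀ a ∈ L, i ≤ a ∧ a ≤ j) ∧
      DKChain n pos L pos' := by
  have hpos'_eq : pos' = pos ∘ rotateIcc (c + 1) (j + 1) ∘ rotateIcc i c := by
    subst hpos'
    funext a
    simp only [comp_apply, rotateIcc]
    split_ifs <;> first | rfl | (exact congrArg pos (by omega))
  refine ⟨(List.range' (c + 1) (j - c)).reverse ++ (List.range' i (c - i)).reverse, ?_, ?_, ?_⟩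
  · rw [← List.reverse_append]
    refine (List.pairwise_reverse.mpr (List.pairwise_append.mpr
      ⟨List.pairwise_lt_range', List.pairwise_lt_range', fun a ha b hb => ?_⟩)).isChain
    simp only [List.mem_range'_1] at ha hb
    omega
  · intro a ha
    simp only [List.mem_append, List.mem_reverse, List.mem_range'_1] at ha
    omega
  · rw [hpos'_eq]
    exact dkChain_append (dkChain_shift_top (by omega) hcj hjn h3 h4)
      (dkChain_shift_bottom hi hic hcj hjn h1 h2 h3)

/-- let `w` be a permutation word of `{1,…,n}` whose restriction
to the letters `{i,…,j+1}` reads `i, i+1, …, c-1, j+1, c, c+1, …, j` (so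
`D(w) ∩ {i,…,j} = {j}`, and `c` is the smallest value following `j+1`).  Then
the sequence of elementary dual Knuth moves `t_j, t_{j-1}, …, t_i` (with the
inapplicable ones skipped, so the labels used form a decreasing list inside
`[i, j]`) transforms `w` into the word `w'` whose restriction to
`{i,…,j+1}` is `(i+1), (i+2), …, c, (c+1), i, (c+2), …, j, (j+1)`: the
letters `c+1,…,j+1` are cyclically shifted by one and the letters `i,…,c`
are cyclically shifted by one. -/
theorem pcomb_dual_knuth (n i j c : ℕ) (pos : ℕ → ℕ)
    (hinj : Function.Injective pos)
    (hi : 1 ≤ i) (hic : i ≤ c) (hcj : c ≤ j) (hjn : j + 1 ≤ n)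
    (h1 : ∀ a, i ≤ a → a + 1 < c → pos a < pos (a + 1))
    (h2 : i < c → pos (c - 1) < pos (j + 1))
    (h3 : pos (j + 1) < pos c)
    (h4 : ∀ a, c ≤ a → a < j → pos a < pos (a + 1))
    (pos' : ℕ → ℕ)
    (hpos' : pos' = fun a =>
      if a = i then pos c
      else if i + 1 ≤ a ∧ a ≤ j + 1 then
        (if a = c + 1 then pos (j + 1) else pos (a - 1))
      else pos a) :
    ∃ L : List ℕ, L.Chain' (· > ·) ∧ (∀ a ∈ L, i ≤ a ∧ a ≤ j) ∧
      DKChain n pos L pos' :=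
  pcomb_dual_knuth_general n i j c pos hi hic hcj hjn h1 h2 h3 h4 pos' hpos'
end
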